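/- Let $X \in \mathbb{R}^{n \times n}$ be a positive semi-definite matrix, $h \in \mathbb{R}^n$, and $\sigma > 0$. Define $Y = X - \frac{1}{h^\top X h + \sigma^2} X h h^\top X$. Then $\ker(Y) = \ker(X)$, and in particular $\mathrm{rank}(Y) = \mathrm{rank}(X)$. -/

import Mathlib

open Matrix

namespace Matrix

theorem rank_eq_rank_of_ker_mulVecLin_eq {m n K : Type*} [Fintype n] [Field K]
    {A B : Matrix m n K} (hAB : LinearMap.ker A.mulVecLin = LinearMap.ker B.mulVecLin) :
    A.rank = B.rank := by
  refine add_right_cancel (b := Module.finrank K (LinearMap.ker A.mulVecLin)) ?_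
  rw [rank, LinearMap.finrank_range_add_finrank_ker, hAB, rank,
    LinearMap.finrank_range_add_finrank_ker]

section RankOneDowndate

variable {n K : Type*} [Fintype n] [Field K] {X : Matrix n n K}

theorem sub_smul_vecMulVec_mulVec_mulVec (hX : Xᵀ = X) (h : n → K) (a : K) (v : n → K) :
    (X - a • vecMulVec (X *ᵥ h) (X *ᵥ h)) *ᵥ v = X *ᵥ v - (a * (h ⬝ᵥ X *ᵥ v)) • X *ᵥ h := by
  rw [sub_mulVec, smul_mulVec, vecMulVec_mulVec, dotProduct_mulVec, ← mulVec_transpose, hX,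
    op_smul_eq_smul, smul_smul]

theorem sub_smul_vecMulVec_mulVec_eq_zero_iff (hX : Xᵀ = X) (h : n → K) {a : K}
    (ha : a * (h ⬝ᵥ X *ᵥ h) ≠ 1) (v : n → K) :
    (X - a • vecMulVec (X *ᵥ h) (X *ᵥ h)) *ᵥ v = 0 ↔ X *ᵥ v = 0 := by
  rw [sub_smul_vecMulVec_mulVec_mulVec hX, sub_eq_zero]
  constructor
  · intro hXv
    -- pairing `X v = (a t) • X h` with `h` gives `t = a t (h ⬝ᵥ X h)`, which forces `t = 0`
    have ht : h ⬝ᵥ X *ᵥ v = 0 := by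
      have hpair := congrArg (h ⬝ᵥ ·) hXv
      simp only [dotProduct_smul, smul_eq_mul] at hpair
      have hprod : (h ⬝ᵥ X *ᵥ v) * (1 - a * (h ⬝ᵥ X *ᵥ h)) = 0 := by
        linear_combination hpair
      exact (mul_eq_zero.mp hprod).resolve_right (sub_ne_zero.mpr ha.symm)
    rw [hXv, ht, mul_zero, zero_smul]
  · intro hXv
    rw [hXv, dotProduct_zero, mul_zero, zero_smul]

end RankOneDowndate

end Matrix

/-- Lemma `proprank`: the rank-one posterior update preserves the kernel,
hence the rank, of a positive semidefinite matrix. -/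
theorem stmt_0 {n : ℕ} (X : Matrix (Fin n) (Fin n) ℝ) (hX : X.PosSemidef)
    (h : Fin n → ℝ) (σ : ℝ) (hσ : 0 < σ)
    (Y : Matrix (Fin n) (Fin n) ℝ)
    (hY : Y = X - (h ⬝ᵥ X.mulVec h + σ ^ 2)⁻¹ •
      vecMulVec (X.mulVec h) (X.mulVec h)) :
    (∀ v : Fin n → ℝ, Y.mulVec v = 0 ↔ X.mulVec v = 0) ∧ Y.rank = X.rank := by
  have hq : 0 ≤ h ⬝ᵥ X *ᵥ h := by simpa using hX.dotProduct_mulVec_nonneg h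
  have hcoeff : (h ⬝ᵥ X *ᵥ h + σ ^ 2)⁻¹ * (h ⬝ᵥ X *ᵥ h) ≠ 1 := by
    rw [inv_mul_eq_div]
    exact ((div_lt_one (by positivity)).mpr (by linarith [pow_pos hσ 2])).ne
  have hker (v : Fin n → ℝ) : Y *ᵥ v = 0 ↔ X *ᵥ v = 0 := by
    rw [hY]
    exact sub_smul_vecMulVec_mulVec_eq_zero_iff hX.isHermitian h hcoeff v
  refine ⟨hker, rank_eq_rank_of_ker_mulVecLin_eq ?_⟩
  ext v
  simpa only [LinearMap.mem_ker, mulVecLin_apply] using hker v
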